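/- Define S₁(E₁,E₂) = −2a₁a₂[√((1−e₁²)(1−e₂²)) sin E₂ cos E₁ + sin E₁ cos E₂ − e₂ sin E₁] and S₂(E₁,E₂) = S₁(E₂,E₁) (with indices 1 and 2 interchanged, i.e. S₂ = −2a₁a₂[√((1−e₁²)(1−e₂²)) sin E₁ cos E₂ + sin E₂ cos E₁ − e₁ sin E₂]). Set F₁(E₁,E₂) = 2e₁a₁²(1 − e₁cos E₁)sin E₁ − S₁(E₁,E₂) and F₂(E₁,E₂) = 2e₂a₂²(1 − e₂cos E₂)sin E₂ − S₂(E₁,E₂). Then ∂F₁/∂E₂ = ∂F₂/∂E₁, i.e. the differential form F₁ dE₁ + F₂ dE₂ is closed (an equation in full derivatives). -/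
import Mathlib


noncomputable def S1 (a₁ a₂ e₁ e₂ E₁ E₂ : ℝ) : ℝ :=
  -2 * a₁ * a₂ * (Real.sqrt ((1 - e₁ ^ 2) * (1 - e₂ ^ 2)) * Real.sin E₂ * Real.cos E₁ +
    Real.sin E₁ * Real.cos E₂ - e₂ * Real.sin E₁)

noncomputable def S2 (a₁ a₂ e₁ e₂ E₁ E₂ : ℝ) : ℝ :=
  -2 * a₁ * a₂ * (Real.sqrt ((1 - e₁ ^ 2) * (1 - e₂ ^ 2)) * Real.sin E₁ * Real.cos E₂ +
    Real.sin E₂ * Real.cos E₁ - e₁ * Real.sin E₂)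

noncomputable def F1 (a₁ a₂ e₁ e₂ E₁ E₂ : ℝ) : ℝ :=
  2 * e₁ * a₁ ^ 2 * (1 - e₁ * Real.cos E₁) * Real.sin E₁ - S1 a₁ a₂ e₁ e₂ E₁ E₂

noncomputable def F2 (a₁ a₂ e₁ e₂ E₁ E₂ : ℝ) : ℝ :=
  2 * e₂ * a₂ ^ 2 * (1 - e₂ * Real.cos E₂) * Real.sin E₂ - S2 a₁ a₂ e₁ e₂ E₁ E₂

theorem full_derivative_form_closed (a₁ a₂ e₁ e₂ : ℝ) (ha₁ : 0 < a₁) (ha₂ : 0 < a₂)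
    (he₁0 : 0 ≤ e₁) (he₁1 : e₁ < 1) (he₂0 : 0 ≤ e₂) (he₂1 : e₂ < 1) (E₁ E₂ : ℝ) :
    deriv (fun y => F1 a₁ a₂ e₁ e₂ E₁ y) E₂ = deriv (fun x => F2 a₁ a₂ e₁ e₂ x E₂) E₁ := by
  set k := Real.sqrt ((1 - e₁ ^ 2) * (1 - e₂ ^ 2)) with hk
  have h1 : HasDerivAt (fun y => F1 a₁ a₂ e₁ e₂ E₁ y)
      (0 - -2 * a₁ * a₂ * (k * Real.cos E₂ * Real.cos E₁ +
        Real.sin E₁ * -Real.sin E₂ - 0)) E₂ := by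
    unfold F1 S1
    rw [← hk]
    exact (hasDerivAt_const _ _).sub
      (HasDerivAt.const_mul (-2 * a₁ * a₂)
        (((((Real.hasDerivAt_sin E₂).const_mul k).mul_const (Real.cos E₁)).add
          ((Real.hasDerivAt_cos E₂).const_mul (Real.sin E₁))).sub
          (hasDerivAt_const _ _)))
  have h2 : HasDerivAt (fun x => F2 a₁ a₂ e₁ e₂ x E₂)
      (0 - -2 * a₁ * a₂ * (k * Real.cos E₁ * Real.cos E₂ +
        Real.sin E₂ * -Real.sin E₁ - 0)) E₁ := by
    unfold F2 S2
    rw [← hk]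
    exact (hasDerivAt_const _ _).sub
      (HasDerivAt.const_mul (-2 * a₁ * a₂)
        (((((Real.hasDerivAt_sin E₁).const_mul k).mul_const (Real.cos E₂)).add
          ((Real.hasDerivAt_cos E₁).const_mul (Real.sin E₂))).sub
          (hasDerivAt_const _ _)))
  rw [h1.deriv, h2.deriv]
  ring
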